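/- arXiv:2507.01552 — 2 statements merged into one kernel-verified Lean document; each statement's English description precedes it below -/
import Mathlib

section
/- For every quaternion P = (p₀, p) ∈ ℝ × ℝ³ with P ≠ 0 and every vector q ∈ ℝ³, the matrix identity A(P)ᵀ · q̃ · p̃ = q̃ · p̃ + (pᵀ q)(I − A(P)ᵀ) holds, where I is the 3×3 identity matrix. -/
open Matrix

/-- The skew-symmetric matrix `p̃` of `p ∈ ℝ³`, satisfying `p̃ v = p × v`. -/
def skew (p : Fin 3 → ℝ) : Matrix (Fin 3) (Fin 3) ℝ :=
  !![0, -p 2, p 1; p 2, 0, -p 0; -p 1, p 0, 0]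

/-- The rotation matrix `A(P) = I + (2/‖P‖²)(p₀ p̃ + p̃²)` associated with a
(not necessarily unit) quaternion `P = (p₀, p)`, where `‖P‖² = p₀² + ‖p‖²`. -/
noncomputable def quatA (p0 : ℝ) (p : Fin 3 → ℝ) : Matrix (Fin 3) (Fin 3) ℝ :=
  1 + (2 / (p0 ^ 2 + p ⬝ᵥ p)) • (p0 • skew p + skew p * skew p)

/-!
Write `Aᵀ = I + c (p̃ − p₀ I) p̃` with `c = 2/‖P‖²`. The identity then reduces to
`p̃ q̃ p̃ = −(pᵀq) p̃`, which is the vector triple product expansion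
`p × (q × (p × v)) = −(pᵀq) (p × v)`.
-/

theorem skew_mulVec (p v : Fin 3 → ℝ) : skew p *ᵥ v = p ⨯₃ v := by
  ext i
  fin_cases i <;>
    simp [skew, cross_apply, mulVec, dotProduct, Fin.sum_univ_three, sub_eq_add_neg, add_comm]

theorem skew_transpose (p : Fin 3 → ℝ) : (skew p)ᵀ = -skew p := by
  ext i j
  fin_cases i <;> fin_cases j <;> simp [skew]

theorem skew_mul_skew_mul_skew (p q : Fin 3 → ℝ) :
    skew p * skew q * skew p = -(p ⬝ᵥ q) • skew p := by
  refine mulVec_injective (funext fun v => ?_)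
  simp only [← mulVec_mulVec, skew_mulVec, neg_smul, neg_mulVec, smul_mulVec,
    cross_cross_eq_smul_sub_smul', map_sub, map_smul, cross_self, smul_zero, zero_sub]

theorem quatA_transpose (p0 : ℝ) (p : Fin 3 → ℝ) :
    (quatA p0 p)ᵀ = 1 + (2 / (p0 ^ 2 + p ⬝ᵥ p)) • ((skew p - p0 • 1) * skew p) := by
  simp only [quatA, transpose_add, transpose_one, transpose_smul, transpose_mul,
    skew_transpose, sub_mul, smul_mul_assoc, one_mul, neg_mul_neg, smul_neg]
  module

theorem quatA_transpose_mul_skew_mul_skew_general (p0 : ℝ) (p : Fin 3 → ℝ)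
    (q : Fin 3 → ℝ) :
    (quatA p0 p)ᵀ * skew q * skew p =
      skew q * skew p + (p ⬝ᵥ q) • ((1 : Matrix (Fin 3) (Fin 3) ℝ) - (quatA p0 p)ᵀ) := by
  rw [quatA_transpose]
  set M := (skew p - p0 • 1) * skew p
  have hM : M * (skew q * skew p) = -(p ⬝ᵥ q) • M := by
    rw [mul_assoc, ← mul_assoc (skew p), skew_mul_skew_mul_skew, mul_smul_comm]
  rw [add_mul, add_mul, one_mul, mul_assoc (_ • M), smul_mul_assoc, hM]
  module

/-- For every nonzero quaternion `P = (p₀, p)` and every `q ∈ ℝ³`: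
`A(P)ᵀ q̃ p̃ = q̃ p̃ + (pᵀq)(I − A(P)ᵀ)`. -/
theorem quatA_transpose_mul_skew_mul_skew (p0 : ℝ) (p : Fin 3 → ℝ) (hP : (p0, p) ≠ 0)
    (q : Fin 3 → ℝ) :
    (quatA p0 p)ᵀ * skew q * skew p =
      skew q * skew p + (p ⬝ᵥ q) • ((1 : Matrix (Fin 3) (Fin 3) ℝ) - (quatA p0 p)ᵀ) :=
  quatA_transpose_mul_skew_mul_skew_general p0 p q
end

section
/- Tangent operator for the quaternion map: let P : ℝ → ℝ × ℝ³, P(t) = (p₀(t), p(t)), be differentiable at t₀ with P(t₀) ≠ 0, and write (p₀′, p′) for the derivative of P at t₀. Then t ↦ A(P(t)) is differentiable at t₀ and A(P(t₀))ᵀ · (d/dt A(P(t)))|_{t=t₀} = κ̃, where κ = (2/‖P(t₀)‖²) ( −p₀′ p(t₀) + p₀(t₀) p′ − p(t₀) × p′ ) ∈ ℝ³; that is, κ = T(P(t₀)) P′(t₀) with the tangent operator T(P) = (2/‖P‖²) ( −p ∣ p₀ I − p̃ ) ∈ ℝ^{3×4}. -/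
open Matrix

attribute [local instance] Matrix.normedAddCommGroup Matrix.normedSpace

lemma matrix_hasDerivAt_of_entries {f : ℝ → Matrix (Fin 3) (Fin 3) ℝ}
    {F : Matrix (Fin 3) (Fin 3) ℝ} {t0 : ℝ}
    (h : ∀ i j, HasDerivAt (fun t => f t i j) (F i j) t0) :
    HasDerivAt f F t0 := by
  exact hasDerivAt_pi.mpr fun i => hasDerivAt_pi.mpr fun j => h i j

lemma matrix_entries_of_hasDerivAt {f : ℝ → Matrix (Fin 3) (Fin 3) ℝ}
    {F : Matrix (Fin 3) (Fin 3) ℝ} {t0 : ℝ} (h : HasDerivAt f F t0)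
    (i j : Fin 3) : HasDerivAt (fun t => f t i j) (F i j) t0 := by
  exact hasDerivAt_pi.mp (hasDerivAt_pi.mp h i) j

lemma matrix_mul_hasDerivAt {f g : ℝ → Matrix (Fin 3) (Fin 3) ℝ}
    {F G : Matrix (Fin 3) (Fin 3) ℝ} {t0 : ℝ}
    (hf : HasDerivAt f F t0) (hg : HasDerivAt g G t0) :
    HasDerivAt (fun t => f t * g t) (F * g t0 + f t0 * G) t0 := by
  apply matrix_hasDerivAt_of_entries
  intro i j
  have h := HasDerivAt.fun_sum (u := Finset.univ) (A := fun k t => f t i k * g t k j)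
    (A' := fun k => F i k * g t0 k j + f t0 i k * G k j)
    (fun k _ => (matrix_entries_of_hasDerivAt hf i k).mul
      (matrix_entries_of_hasDerivAt hg k j))
  simpa [Matrix.mul_apply, Matrix.add_apply, Finset.sum_add_distrib] using h

set_option maxHeartbeats 2000000 in
/-- Tangent operator for the quaternion map: if `t ↦ P(t) = (p₀(t), p(t))` is
differentiable at `t₀` with derivative `(p₀′, p′)` and `P(t₀) ≠ 0`, then
`t ↦ A(P(t))` is differentiable at `t₀` with some derivative `A′` satisfying
`A(P(t₀))ᵀ A′ = κ̃`, where
`κ = (2/‖P(t₀)‖²)(−p₀′ p(t₀) + p₀(t₀) p′ − p(t₀) × p′) = T(P(t₀)) P′(t₀)`. -/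
theorem quatA_tangent_operator (p0 : ℝ → ℝ) (p : ℝ → Fin 3 → ℝ) (t0 p0' : ℝ)
    (p' : Fin 3 → ℝ) (hp0 : HasDerivAt p0 p0' t0) (hp : HasDerivAt p p' t0)
    (hP : (p0 t0, p t0) ≠ 0) :
    ∃ A' : Matrix (Fin 3) (Fin 3) ℝ,
      HasDerivAt (fun t => quatA (p0 t) (p t)) A' t0 ∧
      (quatA (p0 t0) (p t0))ᵀ * A' =
        skew ((2 / ((p0 t0) ^ 2 + p t0 ⬝ᵥ p t0)) •
          (-(p0' • p t0) + p0 t0 • p' - crossProduct (p t0) p')) := by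
  have hpk : ∀ k, HasDerivAt (fun t => p t k) (p' k) t0 := fun k => hasDerivAt_pi.mp hp k
  have hS : HasDerivAt (fun t => skew (p t)) (skew p') t0 := by
    apply matrix_hasDerivAt_of_entries
    intro i j
    fin_cases i <;> fin_cases j <;> simp [skew] <;>
      first
        | exact hasDerivAt_const _ _
        | exact hpk _
        | exact (hpk _).neg
  have hn0' : p0 t0 ^ 2 + (p t0 0 * p t0 0 + p t0 1 * p t0 1 + p t0 2 * p t0 2) ≠ 0 := by
    have h1 : p0 t0 ≠ 0 ∨ p t0 ≠ 0 := by
      by_contra h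
      push_neg at h
      exact hP (by simp [h.1, h.2])
    have hpos : 0 < p0 t0 ^ 2 + (p t0 0 * p t0 0 + p t0 1 * p t0 1 + p t0 2 * p t0 2) := by
      rcases h1 with h | h
      · nlinarith [mul_self_nonneg (p t0 0), mul_self_nonneg (p t0 1),
          mul_self_nonneg (p t0 2), mul_self_pos.mpr h]
      · have h3 : 0 < p t0 ⬝ᵥ p t0 :=
          lt_of_le_of_ne (Finset.sum_nonneg fun k _ => mul_self_nonneg (p t0 k))
            (fun hz => h (dotProduct_self_eq_zero.mp hz.symm))
        simp only [dotProduct, Fin.sum_univ_three] at h3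
        nlinarith [sq_nonneg (p0 t0)]
    exact ne_of_gt hpos
  have hn0 : p0 t0 ^ 2 + p t0 ⬝ᵥ p t0 ≠ 0 := by
    simpa [dotProduct, Fin.sum_univ_three] using hn0'
  have hn : HasDerivAt (fun t => p0 t ^ 2 + p t ⬝ᵥ p t)
      (2 * p0 t0 * p0' + 2 * (p t0 ⬝ᵥ p')) t0 := by
    have h := (hp0.pow 2).add
      ((((hpk 0).mul (hpk 0)).add ((hpk 1).mul (hpk 1))).add ((hpk 2).mul (hpk 2)))
    have he : (fun t => p0 t ^ 2 + p t ⬝ᵥ p t)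
        = fun t => p0 t ^ 2 + (p t 0 * p t 0 + p t 1 * p t 1 + p t 2 * p t 2) := by
      funext t; simp [dotProduct, Fin.sum_univ_three]
    rw [he]
    refine h.congr_deriv ?_
    simp [dotProduct, Fin.sum_univ_three]
    ring
  have hc : HasDerivAt (fun t => 2 / (p0 t ^ 2 + p t ⬝ᵥ p t))
      (-(2 * (2 * p0 t0 * p0' + 2 * (p t0 ⬝ᵥ p'))) / (p0 t0 ^ 2 + p t0 ⬝ᵥ p t0) ^ 2) t0 := by
    have h := (hasDerivAt_const t0 (2:ℝ)).div hn hn0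
    refine h.congr_deriv ?_
    ring
  have hM : HasDerivAt (fun t => p0 t • skew (p t) + skew (p t) * skew (p t))
      ((p0' • skew (p t0) + p0 t0 • skew p')
        + (skew p' * skew (p t0) + skew (p t0) * skew p')) t0 := by
    have h1 := hp0.smul hS
    have h2 := matrix_mul_hasDerivAt hS hS
    refine (h1.add h2).congr_deriv ?_
    abel
  refine ⟨(-(2 * (2 * p0 t0 * p0' + 2 * (p t0 ⬝ᵥ p'))) / (p0 t0 ^ 2 + p t0 ⬝ᵥ p t0) ^ 2) •
      (p0 t0 • skew (p t0) + skew (p t0) * skew (p t0)) +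
    (2 / (p0 t0 ^ 2 + p t0 ⬝ᵥ p t0)) •
      ((p0' • skew (p t0) + p0 t0 • skew p')
        + (skew p' * skew (p t0) + skew (p t0) * skew p')), ?_, ?_⟩
  · have h := (hasDerivAt_const t0 (1 : Matrix (Fin 3) (Fin 3) ℝ)).add (hc.smul hM)
    have he : (fun t => quatA (p0 t) (p t))
        = fun t => (1 : Matrix (Fin 3) (Fin 3) ℝ)
            + (2 / (p0 t ^ 2 + p t ⬝ᵥ p t))
              • (p0 t • skew (p t) + skew (p t) * skew (p t)) := by
      funext t; rfl
    rw [he]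
    refine h.congr_deriv ?_
    abel
  · ext i j
    fin_cases i <;> fin_cases j <;>
      · simp [quatA, skew, Matrix.mul_apply, Matrix.one_apply, Matrix.transpose_apply,
          Fin.sum_univ_three, dotProduct, cross_apply, div_eq_mul_inv,
          Matrix.vecHead, Matrix.vecTail, Function.comp]
        have hD : p0 t0 ^ 2 + (p t0 0 ^ 2 + p t0 1 ^ 2 + p t0 2 ^ 2) ≠ 0 := by
          simpa [sq] using hn0'
        field_simp
        ring
end
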